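/- arXiv:1007.2618 — 4 statements merged into one kernel-verified Lean document; each statement's English description precedes it below -/
import Mathlib

section
/- Let S be a finite set of n elements partitioned as S = U ∪ V with U ∩ V = ∅, and let x_1, ..., x_m be independent uniformly random elements of S. Then for every natural number m_1 with m_1 ≤ |U|, the probability that the set {x_1, ..., x_m} contains at most m_1 distinct elements of U (i.e. |{x_1,...,x_m} ∩ U| ≤ m_1) is at most C(|U|, m_1)·((|V| + m_1)/n)^m. -/
open MeasureTheory ProbabilityTheory Finset

/-!
Union bound over the `m₁`-subsets `T ⊆ U`: if the sample meets at most `m₁` points of `U`, then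
every `x i` lies in `V ∪ T` for some such `T`, and by independence and uniformity this event has
probability `((|V| + m₁) / n) ^ m`.
-/

lemma MeasureTheory.measure_preimage_finset_of_uniform {Ω α : Type*} [MeasurableSpace Ω]
    [MeasurableSpace α] [MeasurableSingletonClass α] {μ : Measure Ω} {X : Ω → α}
    (hX : Measurable X) {S W : Finset α} (hWS : W ⊆ S) {c : ENNReal}
    (hunif : ∀ a ∈ S, μ (X ⁻¹' {a}) = c) :
    μ (X ⁻¹' W) = #W * c := by
  rw [← sum_measure_preimage_singleton W fun a _ => hX (measurableSet_singleton a),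
    sum_congr rfl fun a ha => hunif a (hWS ha), sum_const, nsmul_eq_mul]

lemma ProbabilityTheory.iIndepFun.measure_iInter_preimage_eq_pow {Ω ι β : Type*}
    [MeasurableSpace Ω] [MeasurableSpace β] [Fintype ι] {μ : Measure Ω} {x : ι → Ω → β}
    (hind : iIndepFun x μ) {s : Set β} (hs : MeasurableSet s) {p : ENNReal}
    (hp : ∀ i, μ (x i ⁻¹' s) = p) :
    μ (⋂ i, x i ⁻¹' s) = p ^ Fintype.card ι := by
  simpa [hp] using hind.measure_inter_preimage_eq_mul univ fun i _ => hs

lemma Finset.exists_mem_powersetCard_subset_union {α : Type*} [DecidableEq α]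
    {s U V : Finset α} {k : ℕ} (hs : s ⊆ U ∪ V) (hsk : #(s ∩ U) ≤ k) (hk : k ≤ #U) :
    ∃ T ∈ U.powersetCard k, s ⊆ V ∪ T := by
  obtain ⟨T, hsT, hTU, hTk⟩ := exists_subsuperset_card_eq inter_subset_right hsk hk
  refine ⟨T, mem_powersetCard.2 ⟨hTU, hTk⟩, fun a ha => ?_⟩
  rcases mem_union.1 (hs ha) with haU | haV
  · exact mem_union_right V (hsT (mem_inter.2 ⟨ha, haU⟩))
  · exact mem_union_left T haV

lemma setOf_card_image_inter_le_subset {ι Ω α : Type*} [Fintype ι] [DecidableEq α]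
    {x : ι → Ω → α} {U V : Finset α} (hmem : ∀ i ω, x i ω ∈ U ∪ V) {k : ℕ} (hk : k ≤ #U) :
    {ω | #((univ.image fun i => x i ω) ∩ U) ≤ k}
      ⊆ ⋃ T ∈ U.powersetCard k, ⋂ i, x i ⁻¹' ↑(V ∪ T) := fun ω hω => by
  have hrange : (univ.image fun i => x i ω) ⊆ U ∪ V := by
    simpa [image_subset_iff] using fun i => hmem i ω
  obtain ⟨T, hT, hsub⟩ := exists_mem_powersetCard_subset_union hrange hω hk
  simp only [Set.mem_iUnion, Set.mem_iInter, Set.mem_preimage, mem_coe]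
  exact ⟨T, hT, fun i => hsub (mem_image_of_mem _ (mem_univ i))⟩

theorem spread_lemma_general
    {α : Type*} [MeasurableSpace α] [MeasurableSingletonClass α] [DecidableEq α]
    {Ω : Type*} [MeasurableSpace Ω] (μ : Measure Ω) [IsProbabilityMeasure μ]
    (S U V : Finset α) (n : ℕ)
    (hUV : U ∪ V = S) (hdisj : U ∩ V = ∅)
    (m : ℕ) (x : Fin m → Ω → α)
    (hmeas : ∀ i, Measurable (x i))
    (hind : iIndepFun x μ)
    (hmem : ∀ i ω, x i ω ∈ S)
    (hunif : ∀ i, ∀ a ∈ S, μ {ω | x i ω = a} = 1 / n)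
    (m₁ : ℕ) (hm₁ : m₁ ≤ U.card) :
    (μ {ω | ((Finset.univ.image fun i => x i ω) ∩ U).card ≤ m₁}).toReal
      ≤ (U.card.choose m₁ : ℝ) * (((V.card : ℝ) + m₁) / n) ^ m := by
  have hprob : ∀ T ∈ U.powersetCard m₁,
      μ.real (⋂ i, x i ⁻¹' ↑(V ∪ T)) = (((V.card : ℝ) + m₁) / n) ^ m := by
    intro T hT
    obtain ⟨hTU, hTcard⟩ := mem_powersetCard.1 hT
    have hcard : #(V ∪ T) = #V + m₁ := by
      rw [card_union_of_disjoint ((disjoint_iff_inter_eq_empty.2 hdisj).mono_left hTU).symm,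
        hTcard]
    have hsub : V ∪ T ⊆ S := by
      rw [← hUV]
      exact union_subset subset_union_right (hTU.trans subset_union_left)
    rw [measureReal_def, hind.measure_iInter_preimage_eq_pow (V ∪ T).measurableSet
        fun i => measure_preimage_finset_of_uniform (hmeas i) hsub (hunif i),
      hcard, Fintype.card_fin, ENNReal.toReal_pow, ENNReal.toReal_mul, ENNReal.toReal_natCast,
      one_div, ENNReal.toReal_inv, ENNReal.toReal_natCast, Nat.cast_add, div_eq_mul_inv]
  calc μ.real {ω | #((univ.image fun i => x i ω) ∩ U) ≤ m₁}
      ≤ μ.real (⋃ T ∈ U.powersetCard m₁, ⋂ i, x i ⁻¹' ↑(V ∪ T)) :=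
        measureReal_mono (setOf_card_image_inter_le_subset (hUV ▸ hmem) hm₁)
          (measure_ne_top _ _)
    _ ≤ ∑ T ∈ U.powersetCard m₁, μ.real (⋂ i, x i ⁻¹' ↑(V ∪ T)) :=
        measureReal_biUnion_finset_le _ _
    _ = (U.card.choose m₁ : ℝ) * (((V.card : ℝ) + m₁) / n) ^ m := by
        rw [sum_congr rfl hprob, sum_const, card_powersetCard, nsmul_eq_mul]

/-- Let `S = U ∪ V` be a finite set of `n` elements with `U ∩ V = ∅`, and let
`x 1, ..., x m` be independent uniformly random elements of `S`.  Then for every `m₁ ≤ |U|`,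
the probability that `{x 1, ..., x m}` contains at most `m₁` distinct elements of `U`
is at most `C(|U|, m₁)·((|V| + m₁)/n)^m`. -/
theorem spread_lemma
    {α : Type*} [MeasurableSpace α] [MeasurableSingletonClass α] [DecidableEq α]
    {Ω : Type*} [MeasurableSpace Ω] (μ : Measure Ω) [IsProbabilityMeasure μ]
    (S U V : Finset α) (n : ℕ) (hn : S.card = n) (hn0 : 0 < n)
    (hUV : U ∪ V = S) (hdisj : U ∩ V = ∅)
    (m : ℕ) (x : Fin m → Ω → α)
    (hmeas : ∀ i, Measurable (x i))
    (hind : iIndepFun x μ)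
    (hmem : ∀ i ω, x i ω ∈ S)
    (hunif : ∀ i, ∀ a ∈ S, μ {ω | x i ω = a} = 1 / n)
    (m₁ : ℕ) (hm₁ : m₁ ≤ U.card) :
    (μ {ω | ((Finset.univ.image fun i => x i ω) ∩ U).card ≤ m₁}).toReal
      ≤ (U.card.choose m₁ : ℝ) * (((V.card : ℝ) + m₁) / n) ^ m :=
  spread_lemma_general μ S U V n hUV hdisj m x hmeas hind hmem hunif m₁ hm₁
end

section
/- Fix constants β ∈ (0,1), γ ∈ (0,1) and ε ∈ (0,1), and set c = 1 − β/2 and δ_c = (ln(1/c))/2. There exists N such that for all n ≥ N the following holds: let S_1 and S_2 be finite sets of n elements with |S_1 ∩ S_2| ≥ β·n; let m and m_1 be positive integers with m_1 ≤ δ_c·m / ln(β·n) and m ≤ n^{1−ε}; let C be a set with |C| ≤ γ·m_1; let x_1, ..., x_m be independent uniformly random elements of S_1 and y_1, ..., y_m be independent uniformly random elements of S_2, all 2m draws mutually independent; let A = {x_1,...,x_m} and B = {y_1,...,y_m}. Then the probability that (A − C) ∩ (B − C) = ∅ is at most 2·e^{−(1−γ)·m_1·m / n}. -/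
/-!
Write `D = S₁ ∩ S₂` and `d = |D| ≥ β n`. If `(A − C) ∩ (B − C) = ∅`, then either `A` meets `D` in
fewer than `m₁` points, or `A ∩ D` contains at least `m₁ − |C| ≥ (1 − γ) m₁` points of `S₂ − C`,
all of which every `y_j` has to avoid. Since `(x, y)` is uniform on `S₁^m × S₂^m`, both events are
bounded by counting. The first has probability at most
`(d choose m₁ − 1) ((n − d + m₁ − 1)/n)^m ≤ n^{m₁} (1 − β/2)^m = exp(m₁ ln n − 2 δ_c m)`,
and for large `n` the constraints `m₁ ln(β n) ≤ δ_c m` and `m ≤ n^{1−ε}` push this below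
`exp(−m₁ m / n)`. The second has probability at most
`(1 − (1 − γ) m₁/n)^m ≤ exp(−(1 − γ) m₁ m / n)`.
-/

open MeasureTheory ProbabilityTheory Real

section Counting

open Finset

variable {ι κ α β γ : Type*} [Fintype ι] [Fintype κ] [DecidableEq ι] [DecidableEq κ]
  [DecidableEq α]

theorem card_filter_piFinset_card_image_inter_le {S D : Finset α} (hDS : D ⊆ S) {k : ℕ}
    (hk : k ≤ #D) :
    #{a ∈ Fintype.piFinset (fun _ : ι => S) | #(univ.image a ∩ D) ≤ k}
      ≤ (#D).choose k * (#S - #D + k) ^ Fintype.card ι := by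
  have hcover : {a ∈ Fintype.piFinset (fun _ : ι => S) | #(univ.image a ∩ D) ≤ k} ⊆
      (D.powersetCard k).biUnion fun W => Fintype.piFinset fun _ : ι => (S \ D) ∪ W := by
    intro a ha
    rw [mem_filter, Fintype.mem_piFinset] at ha
    obtain ⟨W, hAW, hWD, hW⟩ := exists_subsuperset_card_eq inter_subset_right ha.2 hk
    refine mem_biUnion.mpr ⟨W, mem_powersetCard.mpr ⟨hWD, hW⟩, Fintype.mem_piFinset.mpr fun i => ?_⟩
    by_cases hi : a i ∈ D
    · exact mem_union_right _ (hAW (mem_inter.mpr ⟨mem_image_of_mem a (mem_univ i), hi⟩))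
    · exact mem_union_left _ (mem_sdiff.mpr ⟨ha.1 i, hi⟩)
  refine (card_le_card hcover).trans ?_
  rw [← card_powersetCard k D]
  refine card_biUnion_le_card_mul _ _ _ fun W hW => ?_
  rw [Fintype.card_piFinset, prod_const, card_univ, ← card_sdiff_of_subset hDS,
    ← (mem_powersetCard.mp hW).2]
  exact Nat.pow_le_pow_left (card_union_le _ _) _

theorem card_filter_piFinset_sdiff_inter_image_sdiff_eq_empty_le (A C S : Finset α) :
    #{b ∈ Fintype.piFinset (fun _ : ι => S) | (A \ C) ∩ (univ.image b \ C) = ∅}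
      ≤ (#S - #((A ∩ S) \ C)) ^ Fintype.card ι := by
  have hsub : {b ∈ Fintype.piFinset (fun _ : ι => S) | (A \ C) ∩ (univ.image b \ C) = ∅} ⊆
      Fintype.piFinset fun _ : ι => S \ ((A ∩ S) \ C) := by
    intro b hb
    rw [mem_filter, Fintype.mem_piFinset] at hb
    refine Fintype.mem_piFinset.mpr fun i => mem_sdiff.mpr ⟨hb.1 i, fun hbi => ?_⟩
    rw [mem_sdiff, mem_inter] at hbi
    have hmem : b i ∈ (A \ C) ∩ (univ.image b \ C) :=
      mem_inter.mpr ⟨mem_sdiff.mpr ⟨hbi.1.1, hbi.2⟩,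
        mem_sdiff.mpr ⟨mem_image_of_mem b (mem_univ i), hbi.2⟩⟩
    simp [hb.2] at hmem
  refine (card_le_card hsub).trans_eq ?_
  rw [Fintype.card_piFinset, prod_const, card_univ,
    card_sdiff_of_subset (sdiff_subset.trans inter_subset_right)]

theorem card_filter_product_le {X : Finset β} {Y : Finset γ} (Q : β × γ → Prop)
    [DecidablePred Q] (bad : β → Prop) [DecidablePred bad] {r : ℕ}
    (hr : ∀ a ∈ X, ¬bad a → #{b ∈ Y | Q (a, b)} ≤ r) :
    #{q ∈ X ×ˢ Y | Q q} ≤ #{a ∈ X | bad a} * #Y + #X * r := by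
  have hfiber : #{q ∈ X ×ˢ Y | Q q} = ∑ a ∈ X, #{b ∈ Y | Q (a, b)} := by
    simp only [card_filter, sum_product]
  calc #{q ∈ X ×ˢ Y | Q q}
      ≤ ∑ a ∈ X, if bad a then #Y else r := by
        rw [hfiber]
        refine sum_le_sum fun a ha => ?_
        split_ifs with h
        · exact card_filter_le _ _
        · exact hr a ha h
    _ ≤ #{a ∈ X | bad a} * #Y + #X * r := by
        rw [sum_ite, sum_const, sum_const, smul_eq_mul, smul_eq_mul]
        exact Nat.add_le_add_left (Nat.mul_le_mul_right _ (card_filter_le _ _)) _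

theorem card_filter_image_sdiff_inter_image_sdiff_eq_empty_le (S₁ S₂ C : Finset α) {k : ℕ}
    (hk : k ≤ #(S₁ ∩ S₂)) :
    #{q ∈ Fintype.piFinset (fun _ : ι => S₁) ×ˢ Fintype.piFinset (fun _ : κ => S₂) |
        (univ.image q.1 \ C) ∩ (univ.image q.2 \ C) = ∅}
      ≤ (#(S₁ ∩ S₂)).choose k * (#S₁ - #(S₁ ∩ S₂) + k) ^ Fintype.card ι * #S₂ ^ Fintype.card κ
        + #S₁ ^ Fintype.card ι * (#S₂ - (k + 1 - #C)) ^ Fintype.card κ := by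
  refine (card_filter_product_le _ (fun a : ι → α => #(univ.image a ∩ (S₁ ∩ S₂)) ≤ k)
    (r := (#S₂ - (k + 1 - #C)) ^ Fintype.card κ) fun a _ hbad => ?_).trans ?_
  · refine (card_filter_piFinset_sdiff_inter_image_sdiff_eq_empty_le (ι := κ) (univ.image a) C
      S₂).trans (Nat.pow_le_pow_left ?_ _)
    have hmeet : #(univ.image a ∩ (S₁ ∩ S₂)) ≤ #(univ.image a ∩ S₂) :=
      card_le_card (inter_subset_inter_left inter_subset_right)
    have := le_card_sdiff C (univ.image a ∩ S₂)
    omega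
  · simp only [Fintype.card_piFinset, prod_const, card_univ]
    exact Nat.add_le_add_right
      (Nat.mul_le_mul_right _ (card_filter_piFinset_card_image_inter_le inter_subset_left hk)) _

end Counting

section Probability

open Finset
open scoped ENNReal

variable {ι κ α Ω : Type*} [Fintype ι] [Fintype κ] [DecidableEq ι] [DecidableEq κ]
  [MeasurableSpace α] [MeasurableSingletonClass α] [MeasurableSpace Ω]
  {μ : Measure Ω}

theorem measure_le_card_filter_piFinset_mul {z : ι → Ω → α} (hz : iIndepFun z μ)
    {S : ι → Finset α} (hzS : ∀ i ω, z i ω ∈ S i) {p : ℝ≥0∞}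
    (hp : ∀ i, ∀ a ∈ S i, μ {ω | z i ω = a} ≤ p) (P : (ι → α) → Prop) [DecidablePred P] :
    μ {ω | P fun i => z i ω} ≤ #{v ∈ Fintype.piFinset S | P v} * p ^ Fintype.card ι := by
  calc μ {ω | P fun i => z i ω}
      ≤ μ (⋃ v ∈ {v ∈ Fintype.piFinset S | P v}, ⋂ i ∈ (univ : Finset ι), z i ⁻¹' {v i}) :=
        measure_mono fun ω hω => Set.mem_iUnion₂.mpr
          ⟨fun i => z i ω, mem_filter.mpr ⟨Fintype.mem_piFinset.mpr (hzS · ω), hω⟩, by simp⟩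
    _ ≤ ∑ v ∈ {v ∈ Fintype.piFinset S | P v}, μ (⋂ i ∈ (univ : Finset ι), z i ⁻¹' {v i}) :=
        measure_biUnion_finset_le _ _
    _ ≤ ∑ _v ∈ {v ∈ Fintype.piFinset S | P v}, p ^ Fintype.card ι := by
        refine sum_le_sum fun v hv => ?_
        rw [hz.measure_inter_preimage_eq_mul _ fun i _ => measurableSet_singleton _]
        exact prod_le_pow_card _ _ _ fun i _ =>
          hp i (v i) (Fintype.mem_piFinset.mp (mem_filter.mp hv).1 i)
    _ = _ := by rw [sum_const, nsmul_eq_mul]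

theorem measure_le_card_filter_product_mul {z : ι ⊕ κ → Ω → α} (hz : iIndepFun z μ)
    {S T : Finset α} (hzS : ∀ i ω, z (.inl i) ω ∈ S) (hzT : ∀ j ω, z (.inr j) ω ∈ T)
    {p : ℝ≥0∞} (hpS : ∀ i, ∀ a ∈ S, μ {ω | z (.inl i) ω = a} ≤ p)
    (hpT : ∀ j, ∀ a ∈ T, μ {ω | z (.inr j) ω = a} ≤ p)
    (Q : (ι → α) × (κ → α) → Prop) [DecidablePred Q] :
    μ {ω | Q (fun i => z (.inl i) ω, fun j => z (.inr j) ω)}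
      ≤ #{q ∈ Fintype.piFinset (fun _ : ι => S) ×ˢ Fintype.piFinset (fun _ : κ => T) | Q q}
        * p ^ (Fintype.card ι + Fintype.card κ) := by
  let e := Equiv.sumArrowEquivProdArrow ι κ α
  have hcard : #{v ∈ Fintype.piFinset (Sum.elim (fun _ => S) fun _ => T) | Q (e v)}
      ≤ #{q ∈ Fintype.piFinset (fun _ : ι => S) ×ˢ Fintype.piFinset (fun _ : κ => T) | Q q} :=
    card_le_card_of_injOn e (fun v hv => by
      simp only [coe_filter, Fintype.mem_piFinset, Sum.forall, Sum.elim_inl, Sum.elim_inr,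
        Set.mem_ofPred_eq] at hv ⊢
      exact ⟨mem_product.mpr ⟨Fintype.mem_piFinset.mpr hv.1.1, Fintype.mem_piFinset.mpr hv.1.2⟩,
        hv.2⟩) e.injective.injOn
  calc _ ≤ #{v ∈ Fintype.piFinset (Sum.elim (fun _ => S) fun _ => T) | Q (e v)}
        * p ^ Fintype.card (ι ⊕ κ) :=
        measure_le_card_filter_piFinset_mul hz (Sum.forall.mpr ⟨hzS, hzT⟩)
          (Sum.forall.mpr ⟨hpS, hpT⟩) (Q ∘ e)
    _ ≤ _ := by
        rw [Fintype.card_sum]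
        gcongr

theorem measureReal_image_sdiff_inter_image_sdiff_eq_empty_le [DecidableEq α] {z : ι ⊕ κ → Ω → α}
    (hz : iIndepFun z μ) {S₁ S₂ : Finset α} (C : Finset α) {n : ℕ} (hn : n ≠ 0)
    (hS₁ : #S₁ = n) (hS₂ : #S₂ = n)
    (hz₁ : ∀ i ω, z (.inl i) ω ∈ S₁) (hu₁ : ∀ i, ∀ a ∈ S₁, μ {ω | z (.inl i) ω = a} = 1 / n)
    (hz₂ : ∀ j ω, z (.inr j) ω ∈ S₂) (hu₂ : ∀ j, ∀ a ∈ S₂, μ {ω | z (.inr j) ω = a} = 1 / n)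
    {k : ℕ} (hk : k ≤ #(S₁ ∩ S₂)) :
    μ.real {ω | ((univ.image fun i => z (.inl i) ω) \ C) ∩
        ((univ.image fun j => z (.inr j) ω) \ C) = ∅}
      ≤ (#(S₁ ∩ S₂)).choose k * (((n - #(S₁ ∩ S₂) + k : ℕ) : ℝ) / n) ^ Fintype.card ι
        + (((n - (k + 1 - #C) : ℕ) : ℝ) / n) ^ Fintype.card κ := by
  have hμ := measure_le_card_filter_product_mul hz hz₁ hz₂ (fun i a ha => (hu₁ i a ha).le)
    (fun j a ha => (hu₂ j a ha).le) fun q => (univ.image q.1 \ C) ∩ (univ.image q.2 \ C) = ∅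
  have hK := card_filter_image_sdiff_inter_image_sdiff_eq_empty_le (ι := ι) (κ := κ) S₁ S₂ C hk
  rw [hS₁, hS₂] at hK
  calc μ.real _
      ≤ #{q ∈ Fintype.piFinset (fun _ : ι => S₁) ×ˢ Fintype.piFinset (fun _ : κ => S₂) |
          (univ.image q.1 \ C) ∩ (univ.image q.2 \ C) = ∅}
        * (1 / (n : ℝ)) ^ (Fintype.card ι + Fintype.card κ) := by
        simpa [measureReal_def, ENNReal.toReal_mul, ENNReal.toReal_pow, ENNReal.toReal_div] using
          ENNReal.toReal_mono (ENNReal.mul_ne_top (ENNReal.natCast_ne_top _) (ENNReal.pow_ne_top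
            (ENNReal.div_lt_top ENNReal.one_ne_top (Nat.cast_ne_zero.mpr hn)).ne)) hμ
    _ ≤ _ := by
        refine (mul_le_mul_of_nonneg_right (Nat.cast_le.mpr hK) (by positivity)).trans_eq ?_
        push_cast
        simp only [div_pow, one_pow, pow_add]
        field_simp

end Probability

theorem choose_mul_div_pow_le {n d k : ℕ} {β : ℝ} (m : ℕ) (hn : 0 < n) (hdn : d ≤ n)
    (hβd : β * n ≤ d) (hk : (k : ℝ) ≤ β / 2 * n) :
    (d.choose k : ℝ) * (((n - d + k : ℕ) : ℝ) / n) ^ m ≤ (n : ℝ) ^ k * (1 - β / 2) ^ m := by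
  have hchoose : (d.choose k : ℝ) ≤ (n : ℝ) ^ k := by
    exact_mod_cast (d.choose_le_pow k).trans (Nat.pow_le_pow_left hdn k)
  have hbase : ((n - d + k : ℕ) : ℝ) / n ≤ 1 - β / 2 := by
    rw [div_le_iff₀ (by positivity), Nat.cast_add, Nat.cast_sub hdn]
    linarith
  exact mul_le_mul hchoose (pow_le_pow_left₀ (by positivity) hbase m) (by positivity)
    (by positivity)

theorem sub_div_pow_le_exp {n m₁ c : ℕ} {γ : ℝ} (m : ℕ) (hn : 0 < n) (hm₁ : m₁ ≤ n)
    (hc : (c : ℝ) ≤ γ * m₁) :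
    (((n - (m₁ - c) : ℕ) : ℝ) / n) ^ m ≤ exp (-((1 - γ) * m₁ * m / n)) := by
  have hbase : ((n - (m₁ - c) : ℕ) : ℝ) / n ≤ exp (-((1 - γ) * m₁ / n)) := by
    refine le_trans ?_ (one_sub_le_exp_neg _)
    have hsub : (m₁ : ℝ) ≤ ((m₁ - c : ℕ) : ℝ) + c := by exact_mod_cast le_tsub_add
    rw [Nat.cast_sub ((Nat.sub_le _ _).trans hm₁), sub_div, div_self (by positivity)]
    gcongr
    linarith
  calc (((n - (m₁ - c) : ℕ) : ℝ) / n) ^ m ≤ exp (-((1 - γ) * m₁ / n)) ^ m :=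
        pow_le_pow_left₀ (by positivity) hbase m
    _ = exp (-((1 - γ) * m₁ * m / n)) := by rw [← exp_nat_mul]; ring_nf

theorem le_mul_of_le_mul_div_of_le_rpow {δ L b x ε m₁ m : ℝ} (hx : 0 < x) (hL : 1 ≤ L)
    (hδ : 0 ≤ δ) (hm : 0 ≤ m) (hm₁ : m₁ ≤ δ * m / L) (hmx : m ≤ x ^ (1 - ε))
    (hδx : δ ≤ b * x ^ ε) : m₁ ≤ b * x :=
  calc m₁ ≤ δ * m / L := hm₁
    _ ≤ δ * m := div_le_self (by positivity) hL
    _ ≤ δ * x ^ (1 - ε) := mul_le_mul_of_nonneg_left hmx hδ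
    _ ≤ b * x ^ ε * x ^ (1 - ε) := mul_le_mul_of_nonneg_right hδx (rpow_nonneg hx.le _)
    _ = b * x := by rw [mul_assoc, ← rpow_add hx, add_sub_cancel, rpow_one]

theorem pow_mul_pow_le_exp {β ε x : ℝ} {m m₁ : ℕ} (hβ : 0 < β) (hβ₂ : β < 2) (hx : 0 < x)
    (hL : 1 ≤ log (β * x)) (hLβ : 2 * log (1 / β) ≤ log (β * x)) (hx₂ : 2 ≤ x ^ ε)
    (hm₁ : (m₁ : ℝ) ≤ log (1 / (1 - β / 2)) / 2 * m / log (β * x))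
    (hm : (m : ℝ) ≤ x ^ (1 - ε)) :
    x ^ m₁ * (1 - β / 2) ^ m ≤ exp (-(m₁ * m / x)) := by
  have hlogx : log x = log (β * x) + log (1 / β) := by
    rw [log_mul hβ.ne' hx.ne', one_div, log_inv]; ring
  set δ := log (1 / (1 - β / 2)) / 2
  set L := log (β * x)
  have hm₁L : m₁ * L ≤ δ * m := (le_div_iff₀ (by linarith)).mp hm₁
  have hmx : (m : ℝ) / x ≤ 1 / 2 := by
    rw [rpow_sub hx, rpow_one] at hm
    rw [div_le_iff₀ hx]
    calc (m : ℝ) ≤ x / x ^ ε := hm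
      _ ≤ x / 2 := div_le_div_of_nonneg_left hx.le two_pos hx₂
      _ = 1 / 2 * x := by ring
  have hexp : x ^ m₁ * (1 - β / 2) ^ m = exp (m₁ * log x - 2 * δ * m) := by
    rw [show (m₁ : ℝ) * log x - 2 * δ * m = m₁ * log x + m * log (1 - β / 2) by
        simp only [δ, one_div, log_inv]; ring,
      exp_add, exp_nat_mul, exp_nat_mul, exp_log hx, exp_log (by linarith)]
  rw [hexp, exp_le_exp, hlogx]
  have hm₁0 : (0 : ℝ) ≤ m₁ := m₁.cast_nonneg
  rw [mul_div_assoc]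
  linarith [mul_le_mul_of_nonneg_left hmx hm₁0, mul_le_mul_of_nonneg_left hL hm₁0,
    mul_le_mul_of_nonneg_left hLβ hm₁0]

theorem eventually_parameter_bounds {β ε : ℝ} (hβ : 0 < β) (hβ₂ : β < 2) (hε : 0 < ε) :
    ∀ᶠ n : ℕ in Filter.atTop, 0 < n ∧ ∀ m m₁ : ℕ,
      (m₁ : ℝ) ≤ log (1 / (1 - β / 2)) / 2 * m / log (β * n) → (m : ℝ) ≤ (n : ℝ) ^ (1 - ε) →
        (m₁ : ℝ) ≤ β / 2 * n ∧ (n : ℝ) ^ m₁ * (1 - β / 2) ^ m ≤ exp (-(m₁ * m / n)) := by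
  have hδ : 0 ≤ log (1 / (1 - β / 2)) / 2 := by
    have : 1 ≤ 1 / (1 - β / 2) := by rw [le_div_iff₀ (by linarith)]; linarith
    exact div_nonneg (log_nonneg this) zero_le_two
  have hlog : Filter.Tendsto (fun n : ℕ => log (β * n)) Filter.atTop Filter.atTop :=
    tendsto_log_atTop.comp (tendsto_natCast_atTop_atTop.const_mul_atTop hβ)
  have hpow : Filter.Tendsto (fun n : ℕ => (n : ℝ) ^ ε) Filter.atTop Filter.atTop :=
    (tendsto_rpow_atTop hε).comp tendsto_natCast_atTop_atTop
  filter_upwards [hlog.eventually_ge_atTop 1, hlog.eventually_ge_atTop (2 * log (1 / β)),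
    hpow.eventually_ge_atTop 2, hpow.eventually_ge_atTop (log (1 / (1 - β / 2)) / 2 / (β / 2)),
    Filter.eventually_gt_atTop 0] with n hL hLβ hn₂ hnδ hn
  have hn' : (0 : ℝ) < n := by exact_mod_cast hn
  exact ⟨hn, fun m m₁ hm₁ hm =>
    ⟨le_mul_of_le_mul_div_of_le_rpow hn' hL hδ m.cast_nonneg hm₁ hm
      ((div_le_iff₀' (by positivity)).mp hnδ),
    pow_mul_pow_le_exp hβ hβ₂ hn' hL hLβ hn₂ hm₁ hm⟩⟩

theorem intersection_lemma_general
    (β γ ε : ℝ) (hβ : β ∈ Set.Ioo (0 : ℝ) 1)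
    (hε : ε ∈ Set.Ioo (0 : ℝ) 1) :
    ∃ N : ℕ, ∀ n : ℕ, N ≤ n →
      ∀ (α : Type) [MeasurableSpace α] [MeasurableSingletonClass α] [DecidableEq α]
        (Ω : Type) [MeasurableSpace Ω] (μ : Measure Ω) [IsProbabilityMeasure μ]
        (S₁ S₂ : Finset α), S₁.card = n → S₂.card = n → β * n ≤ ((S₁ ∩ S₂).card : ℝ) →
      ∀ m m₁ : ℕ, 0 < m → 0 < m₁ →
        (m₁ : ℝ) ≤ (Real.log (1 / (1 - β / 2)) / 2) * m / Real.log (β * n) →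
        (m : ℝ) ≤ (n : ℝ) ^ ((1 : ℝ) - ε) →
      ∀ C : Finset α, (C.card : ℝ) ≤ γ * m₁ →
      ∀ z : Fin m ⊕ Fin m → Ω → α,
        (∀ i, Measurable (z i)) →
        iIndepFun z μ →
        (∀ i : Fin m, ∀ ω, z (Sum.inl i) ω ∈ S₁) →
        (∀ i : Fin m, ∀ a ∈ S₁, μ {ω | z (Sum.inl i) ω = a} = 1 / n) →
        (∀ i : Fin m, ∀ ω, z (Sum.inr i) ω ∈ S₂) →
        (∀ i : Fin m, ∀ a ∈ S₂, μ {ω | z (Sum.inr i) ω = a} = 1 / n) →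
        (μ {ω | ((Finset.univ.image fun i => z (Sum.inl i) ω) \ C) ∩
                  ((Finset.univ.image fun i => z (Sum.inr i) ω) \ C) = ∅}).toReal
          ≤ 2 * Real.exp (-((1 - γ) * m₁ * m / n)) := by
  obtain ⟨N, hN⟩ := Filter.eventually_atTop.mp
    (eventually_parameter_bounds hβ.1 (by linarith [hβ.2]) hε.1)
  refine ⟨N, fun n hNn α _ _ _ Ω _ μ _ S₁ S₂ hS₁ hS₂ hβd m m₁ _ hm₁ hm₁δ hmn C hC z _ hz hz₁ hu₁
    hz₂ hu₂ => ?_⟩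
  obtain ⟨hn, hbounds⟩ := hN n hNn
  obtain ⟨hm₁β, hpow⟩ := hbounds m m₁ hm₁δ hmn
  have hdn : (S₁ ∩ S₂).card ≤ n := hS₁ ▸ Finset.card_le_card Finset.inter_subset_left
  have hm₁d : m₁ ≤ (S₁ ∩ S₂).card := by
    exact_mod_cast hm₁β.trans (le_trans (by nlinarith [(n.cast_nonneg : (0 : ℝ) ≤ n)]) hβd)
  refine (measureReal_image_sdiff_inter_image_sdiff_eq_empty_le hz C hn.ne' hS₁ hS₂
    hz₁ hu₁ hz₂ hu₂ (k := m₁ - 1) (by omega)).trans ?_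
  rw [Nat.sub_add_cancel hm₁, Fintype.card_fin, two_mul]
  refine add_le_add ?_ (sub_div_pow_le_exp m hn (hm₁d.trans hdn) hC)
  calc _ ≤ (n : ℝ) ^ (m₁ - 1) * (1 - β / 2) ^ m :=
        choose_mul_div_pow_le m hn hdn hβd (le_trans (by simp) hm₁β)
    _ ≤ (n : ℝ) ^ m₁ * (1 - β / 2) ^ m :=
        mul_le_mul_of_nonneg_right (pow_le_pow_right₀ (by exact_mod_cast hn) (Nat.sub_le _ _))
          (pow_nonneg (by linarith [hβ.2]) _)
    _ ≤ exp (-(m₁ * m / n)) := hpow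
    _ ≤ exp (-((1 - γ) * m₁ * m / n)) := by
        have hγm₁ : 0 ≤ γ * m₁ := C.card.cast_nonneg.trans hC
        gcongr
        linarith

/-- Fix `β, γ, ε ∈ (0,1)`, `c = 1 − β/2`, `δ_c = ln(1/c)/2`.  For all large enough `n`:
if `S₁, S₂` are `n`-element finite sets with `|S₁ ∩ S₂| ≥ β·n`, `m, m₁` are positive integers
with `m₁ ≤ δ_c·m / ln(β·n)` and `m ≤ n^{1−ε}`, `C` is a set with `|C| ≤ γ·m₁`, and
`x 1, ..., x m` (resp. `y 1, ..., y m`) are uniformly random elements of `S₁` (resp. `S₂`),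
all `2m` draws mutually independent, then with `A = {x 1,...,x m}` and `B = {y 1,...,y m}`
we have `Pr[(A − C) ∩ (B − C) = ∅] ≤ 2·e^{−(1−γ)·m₁·m/n}`. -/
theorem intersection_lemma
    (β γ ε : ℝ) (hβ : β ∈ Set.Ioo (0 : ℝ) 1) (hγ : γ ∈ Set.Ioo (0 : ℝ) 1)
    (hε : ε ∈ Set.Ioo (0 : ℝ) 1) :
    ∃ N : ℕ, ∀ n : ℕ, N ≤ n →
      ∀ (α : Type) [MeasurableSpace α] [MeasurableSingletonClass α] [DecidableEq α]
        (Ω : Type) [MeasurableSpace Ω] (μ : Measure Ω) [IsProbabilityMeasure μ]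
        (S₁ S₂ : Finset α), S₁.card = n → S₂.card = n → β * n ≤ ((S₁ ∩ S₂).card : ℝ) →
      ∀ m m₁ : ℕ, 0 < m → 0 < m₁ →
        (m₁ : ℝ) ≤ (Real.log (1 / (1 - β / 2)) / 2) * m / Real.log (β * n) →
        (m : ℝ) ≤ (n : ℝ) ^ ((1 : ℝ) - ε) →
      ∀ C : Finset α, (C.card : ℝ) ≤ γ * m₁ →
      ∀ z : Fin m ⊕ Fin m → Ω → α,
        (∀ i, Measurable (z i)) →
        iIndepFun z μ →
        (∀ i : Fin m, ∀ ω, z (Sum.inl i) ω ∈ S₁) →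
        (∀ i : Fin m, ∀ a ∈ S₁, μ {ω | z (Sum.inl i) ω = a} = 1 / n) →
        (∀ i : Fin m, ∀ ω, z (Sum.inr i) ω ∈ S₂) →
        (∀ i : Fin m, ∀ a ∈ S₂, μ {ω | z (Sum.inr i) ω = a} = 1 / n) →
        (μ {ω | ((Finset.univ.image fun i => z (Sum.inl i) ω) \ C) ∩
                  ((Finset.univ.image fun i => z (Sum.inr i) ω) \ C) = ∅}).toReal
          ≤ 2 * Real.exp (-((1 - γ) * m₁ * m / n)) :=
  intersection_lemma_general β γ ε hβ hε
end

section
/- Let Σ be a finite alphabet of size t ≥ 2, let X_1 be a fixed word of length m over Σ, and let X_2 be a random word of length m whose characters are independent and uniformly distributed on Σ. Let β, ε be real numbers with 0 < ε < 1/3 and β + 1/t + ε ≤ 1. Then the probability that the relative Hamming distance diff(X_1, X_2) is at most β (equivalently, the number of positions i with X_1[i] = X_2[i] is at least (1−β)·m) is at most e^{−(ε²·m)/3}. -/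
open MeasureTheory ProbabilityTheory Real

/-! The number of positions where `X₂` agrees with `X₁` is a sum of `m` independent indicators of
mean `1 / t`. A relative distance of at most `β ≤ 1 - 1/t - ε` forces this sum to exceed its mean
by at least `ε m`, which by Hoeffding's inequality has probability at most `exp (-2 ε² m)`. -/

theorem measureReal_sum_sub_integral_ge_le_of_iIndepFun {Ω ι : Type*} [MeasurableSpace Ω]
    {μ : Measure Ω} [IsProbabilityMeasure μ] {Y : ι → Ω → ℝ} (hind : iIndepFun Y μ)
    (hmeas : ∀ i, AEMeasurable (Y i) μ) {a b : ℝ} (hY : ∀ i, ∀ᵐ ω ∂μ, Y i ω ∈ Set.Icc a b)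
    (s : Finset ι) {ε : ℝ} (hε : 0 ≤ ε) :
    μ.real {ω | ε ≤ ∑ i ∈ s, (Y i ω - μ[Y i])} ≤ exp (-2 * ε ^ 2 / (s.card * (b - a) ^ 2)) := by
  have hsubG : ∀ i ∈ s, HasSubgaussianMGF (fun ω ↦ Y i ω - μ[Y i]) ((‖b - a‖₊ / 2) ^ 2) μ :=
    fun i _ ↦ hasSubgaussianMGF_of_mem_Icc (hmeas i) (hY i)
  refine (HasSubgaussianMGF.measure_sum_ge_le_of_iIndepFun
    (hind.comp (fun i x ↦ x - μ[Y i]) fun i ↦ by fun_prop) hsubG hε).trans_eq ?_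
  rw [← sq_abs (b - a)]
  simp only [Finset.sum_const, nsmul_eq_mul, NNReal.coe_mul, NNReal.coe_natCast, NNReal.coe_pow,
    NNReal.coe_div, coe_nnnorm, Real.norm_eq_abs, NNReal.coe_ofNat]
  congr 1
  ring

theorem card_filter_ne_eq_sub_sum_ite {ι A : Type*} [Fintype ι] [DecidableEq A] (u v : ι → A) :
    ((Finset.univ.filter fun i ↦ u i ≠ v i).card : ℝ) =
      Fintype.card ι - ∑ i, if v i = u i then 1 else 0 := by
  rw [Finset.sum_boole, eq_sub_iff_add_eq]
  norm_cast
  simp_rw [eq_comm (a := v _)]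
  rw [add_comm, Finset.card_filter_add_card_filter_not, Finset.card_univ]

theorem integral_ite_eq_measureReal {Ω A : Type*} [MeasurableSpace Ω] [MeasurableSpace A]
    [MeasurableSingletonClass A] [DecidableEq A] {μ : Measure Ω} {X : Ω → A} (hX : Measurable X)
    (a : A) : μ[fun ω ↦ if X ω = a then (1 : ℝ) else 0] = μ.real {ω | X ω = a} := by
  rw [← integral_indicator_one (s := {ω | X ω = a}) (hX measurableSet_eq)]
  congr 1 with ω
  simp [Set.indicator_apply]

theorem random_word_match_prob_general
    {A : Type*} [DecidableEq A] [MeasurableSpace A] [MeasurableSingletonClass A]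
    {Ω : Type*} [MeasurableSpace Ω] (μ : Measure Ω) [IsProbabilityMeasure μ]
    (t : ℕ) (m : ℕ) (X₁ : Fin m → A) (X₂ : Fin m → Ω → A)
    (hmeas : ∀ i, Measurable (X₂ i))
    (hind : iIndepFun X₂ μ)
    (hunif : ∀ i a, μ {ω | X₂ i ω = a} = 1 / t)
    (β ε : ℝ) (hε0 : 0 < ε) (hβ : β + 1 / t + ε ≤ 1) :
    (μ {ω | ((Finset.univ.filter fun i => X₁ i ≠ X₂ i ω).card : ℝ) ≤ β * m}).toReal
      ≤ Real.exp (-(ε ^ 2 * m) / 3) := by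
  set Y : Fin m → Ω → ℝ := fun i ω ↦ if X₂ i ω = X₁ i then 1 else 0
  have hYmeas (i : Fin m) : Measurable (Y i) :=
    measurable_const.ite (hmeas i measurableSet_eq) measurable_const
  have hYind : iIndepFun Y μ :=
    hind.comp _ fun i ↦ measurable_const.ite measurableSet_eq measurable_const
  have hYunit (i : Fin m) : ∀ᵐ ω ∂μ, Y i ω ∈ Set.Icc 0 1 :=
    ae_of_all _ fun ω ↦ by by_cases h : X₂ i ω = X₁ i <;> simp [Y, h]
  have hmean (i : Fin m) : μ[Y i] = 1 / (t : ℝ) := by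
    simp [Y, integral_ite_eq_measureReal (hmeas i), measureReal_def, hunif]
  have hsub : {ω | ((Finset.univ.filter fun i => X₁ i ≠ X₂ i ω).card : ℝ) ≤ β * m}
      ⊆ {ω | ε * m ≤ ∑ i, (Y i ω - μ[Y i])} := by
    intro ω hω
    simp only [Set.mem_ofPred_eq, card_filter_ne_eq_sub_sum_ite, Fintype.card_fin] at hω ⊢
    simp only [Finset.sum_sub_distrib, hmean, Finset.sum_const, Finset.card_univ, Fintype.card_fin,
      nsmul_eq_mul]
    linarith [mul_le_mul_of_nonneg_right hβ (Nat.cast_nonneg (α := ℝ) m)]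
  calc μ.real _ ≤ μ.real {ω | ε * m ≤ ∑ i, (Y i ω - μ[Y i])} := measureReal_mono hsub
    _ ≤ exp (-2 * (ε * m) ^ 2 / m) := by
      simpa using measureReal_sum_sub_integral_ge_le_of_iIndepFun hYind
        (fun i ↦ (hYmeas i).aemeasurable) hYunit Finset.univ (by positivity)
    _ ≤ exp (-(ε ^ 2 * m) / 3) := by
      rcases Nat.eq_zero_or_pos m with rfl | hm
      · simp
      · rw [exp_le_exp]
        field_simp
        nlinarith [(Nat.cast_pos.2 hm : (0 : ℝ) < m), sq_nonneg ε]

/-- Let `Σ` be an alphabet of size `t ≥ 2`, `X₁` a fixed word of length `m`, and `X₂` a random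
word of length `m` with independent uniformly distributed characters.  If `0 < ε < 1/3` and
`β + 1/t + ε ≤ 1`, then the probability that the relative Hamming distance `diff(X₁, X₂) ≤ β`
(i.e. the number of mismatched positions is at most `β·m`) is at most `e^{−ε²·m/3}`. -/
theorem random_word_match_prob
    {A : Type*} [Fintype A] [DecidableEq A] [MeasurableSpace A] [MeasurableSingletonClass A]
    {Ω : Type*} [MeasurableSpace Ω] (μ : Measure Ω) [IsProbabilityMeasure μ]
    (t : ℕ) (ht : Fintype.card A = t) (ht2 : 2 ≤ t)
    (m : ℕ) (X₁ : Fin m → A) (X₂ : Fin m → Ω → A)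
    (hmeas : ∀ i, Measurable (X₂ i))
    (hind : iIndepFun X₂ μ)
    (hunif : ∀ i a, μ {ω | X₂ i ω = a} = 1 / t)
    (β ε : ℝ) (hε0 : 0 < ε) (hε1 : ε < 1 / 3) (hβ : β + 1 / t + ε ≤ 1) :
    (μ {ω | ((Finset.univ.filter fun i => X₁ i ≠ X₂ i ω).card : ℝ) ≤ β * m}).toReal
      ≤ Real.exp (-(ε ^ 2 * m) / 3) :=
  random_word_match_prob_general μ t m X₁ X₂ hmeas hind hunif β ε hε0 hβ
end

section
/- Let b_1, ..., b_m be independent {0,1}-valued random variables such that each b_i takes value 1 with probability at most α (a value 1 at position i represents a mutation at that position). Let ε ∈ (0,1/3), let c = e^{−ε²/3}, and let y be a positive integer with y ≤ m. Then the probability that there exists some t with y ≤ t ≤ m such that b_1 + ... + b_t > (α+ε)·t is at most c^y / (1−c). -/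
/-!
Centred at their means (which are at most `α`), the `b i` are sub-Gaussian with variance proxy
`1/4` by Hoeffding's lemma, so Hoeffding's inequality bounds the probability that the first `t`
of them sum to more than `(α + ε) t` by `exp (-2 ε² t) ≤ c ^ t`. A union bound over `t ≥ y`
and the geometric series finish the proof.
-/

open MeasureTheory ProbabilityTheory Real Finset

theorem integral_eq_measureReal_of_eq_zero_or_one {Ω : Type*} [MeasurableSpace Ω]
    {μ : Measure Ω} {X : Ω → ℝ} (hX : Measurable X) (h01 : ∀ ω, X ω = 0 ∨ X ω = 1) :
    μ[X] = μ.real {ω | X ω = 1} := by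
  have hX_eq : X = Set.indicator {ω | X ω = 1} 1 := by
    funext ω
    rcases h01 ω with h | h <;> simp [h]
  conv_lhs => rw [hX_eq]
  exact integral_indicator_one (hX (measurableSet_singleton 1))

theorem measureReal_sum_gt_le_of_iIndepFun {Ω ι : Type*} [MeasurableSpace Ω]
    {μ : Measure Ω} [IsProbabilityMeasure μ] {b : ι → Ω → ℝ}
    (hmeas : ∀ i, Measurable (b i)) (hind : iIndepFun b μ)
    (hb : ∀ i ω, b i ω ∈ Set.Icc (0 : ℝ) 1) {α ε : ℝ} (hmean : ∀ i, μ[b i] ≤ α)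
    (hε : 0 ≤ ε) (s : Finset ι) :
    μ.real {ω | (α + ε) * #s < ∑ i ∈ s, b i ω} ≤ exp (-2 * ε ^ 2 * #s) := by
  set X : ι → Ω → ℝ := fun i ω => b i ω - μ[b i]
  have hX_ind : iIndepFun X μ := hind.comp _ fun i => measurable_id.sub_const _
  have hX_subG : ∀ i ∈ s, HasSubgaussianMGF (X i) ((‖(1 : ℝ) - 0‖₊ / 2) ^ 2) μ := fun i _ =>
    hasSubgaussianMGF_of_mem_Icc (hmeas i).aemeasurable (ae_of_all _ (hb i))
  have hsub : {ω | (α + ε) * #s < ∑ i ∈ s, b i ω} ⊆ {ω | ε * #s ≤ ∑ i ∈ s, X i ω} := by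
    intro ω hω
    have hmean_sum : ∑ i ∈ s, μ[b i] ≤ α * #s := by
      simpa [mul_comm] using sum_le_card_nsmul s _ α fun i _ => hmean i
    simp only [Set.mem_ofPred_eq, X, sum_sub_distrib] at hω ⊢
    linarith
  calc μ.real {ω | (α + ε) * #s < ∑ i ∈ s, b i ω}
      ≤ μ.real {ω | ε * #s ≤ ∑ i ∈ s, X i ω} := measureReal_mono hsub
    _ ≤ exp (-(ε * #s) ^ 2 / (2 * ∑ i ∈ s, ((‖(1 : ℝ) - 0‖₊ / 2) ^ 2 : NNReal))) :=
        HasSubgaussianMGF.measure_sum_ge_le_of_iIndepFun hX_ind hX_subG (by positivity)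
    _ = exp (-2 * ε ^ 2 * #s) := by
        rcases s.eq_empty_or_nonempty with rfl | hs
        · simp
        · have : (#s : ℝ) ≠ 0 := by positivity
          congr 1
          simp only [sub_zero, nnnorm_one, one_div, inv_pow, sum_const, nsmul_eq_mul,
            NNReal.coe_mul, NNReal.coe_natCast, NNReal.coe_inv, NNReal.coe_pow,
            NNReal.coe_ofNat, neg_mul]
          field_simp

theorem mutation_prefix_bound_general
    {Ω : Type*} [MeasurableSpace Ω] (μ : Measure Ω) [IsProbabilityMeasure μ]
    (m : ℕ) (b : Fin m → Ω → ℝ)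
    (hmeas : ∀ i, Measurable (b i))
    (hind : iIndepFun b μ)
    (h01 : ∀ i ω, b i ω = 0 ∨ b i ω = 1)
    (α : ℝ)
    (hub : ∀ i, (μ {ω | b i ω = 1}).toReal ≤ α)
    (ε : ℝ) (hε0 : 0 < ε)
    (y : ℕ) :
    (μ {ω | ∃ t : ℕ, y ≤ t ∧ t ≤ m ∧
        (α + ε) * t < ∑ i ∈ Finset.univ.filter fun i : Fin m => (i : ℕ) < t, b i ω}).toReal
      ≤ Real.exp (-ε ^ 2 / 3) ^ y / (1 - Real.exp (-ε ^ 2 / 3)) := by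
  set c := exp (-ε ^ 2 / 3)
  have hc : c < 1 := exp_lt_one_iff.2 (by nlinarith)
  have hb : ∀ i ω, b i ω ∈ Set.Icc (0 : ℝ) 1 := fun i ω => by
    rcases h01 i ω with h | h <;> simp [h]
  have hmean : ∀ i, μ[b i] ≤ α := fun i =>
    (integral_eq_measureReal_of_eq_zero_or_one (hmeas i) (h01 i)).trans_le (hub i)
  set E : ℕ → Set Ω := fun t =>
    {ω | (α + ε) * t < ∑ i ∈ univ.filter fun i : Fin m => (i : ℕ) < t, b i ω}
  have htail : ∀ t ∈ Icc y m, μ.real (E t) ≤ c ^ t := by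
    intro t ht
    have hcard : #{i : Fin m | i < t} = t := by
      rw [Fin.card_filter_val_lt]; exact min_eq_right (mem_Icc.1 ht).2
    calc _ ≤ exp (-2 * ε ^ 2 * t) := by
          simpa [hcard] using measureReal_sum_gt_le_of_iIndepFun hmeas hind hb hmean hε0.le
            {i : Fin m | i < t}
      _ ≤ c ^ t := by
          rw [← exp_nat_mul]
          exact exp_le_exp.2 (by nlinarith [sq_nonneg ε, (t.cast_nonneg : (0 : ℝ) ≤ t)])
  calc μ.real {ω | ∃ t : ℕ, y ≤ t ∧ t ≤ m ∧ ω ∈ E t}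
      ≤ μ.real (⋃ t ∈ Icc y m, E t) :=
        measureReal_mono (fun ω ⟨t, hyt, htm, hω⟩ => Set.mem_biUnion (mem_Icc.2 ⟨hyt, htm⟩) hω)
          (measure_ne_top _ _)
    _ ≤ ∑ t ∈ Icc y m, μ.real (E t) := measureReal_biUnion_finset_le _ _
    _ ≤ ∑ t ∈ Icc y m, c ^ t := sum_le_sum htail
    _ ≤ c ^ y / (1 - c) := by
        rw [← Ico_add_one_right_eq_Icc]
        exact geom_sum_Ico_le_of_lt_one (exp_pos _).le hc

/-- Let `b 1, ..., b m` be independent `{0,1}`-valued random variables, each taking value `1`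
(a mutation) with probability at most `α`.  Let `0 < ε < 1/3`, `c = e^{−ε²/3}`, and let `y` be
a positive integer with `y ≤ m`.  Then the probability that for some `t` with `y ≤ t ≤ m` the
first `t` variables sum to more than `(α+ε)·t` is at most `c^y / (1−c)`. -/
theorem mutation_prefix_bound
    {Ω : Type*} [MeasurableSpace Ω] (μ : Measure Ω) [IsProbabilityMeasure μ]
    (m : ℕ) (b : Fin m → Ω → ℝ)
    (hmeas : ∀ i, Measurable (b i))
    (hind : iIndepFun b μ)
    (h01 : ∀ i ω, b i ω = 0 ∨ b i ω = 1)
    (α : ℝ) (hα0 : 0 ≤ α) (hα1 : α ≤ 1)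
    (hub : ∀ i, (μ {ω | b i ω = 1}).toReal ≤ α)
    (ε : ℝ) (hε0 : 0 < ε) (hε1 : ε < 1 / 3)
    (y : ℕ) (hy0 : 0 < y) (hym : y ≤ m) :
    (μ {ω | ∃ t : ℕ, y ≤ t ∧ t ≤ m ∧
        (α + ε) * t < ∑ i ∈ Finset.univ.filter fun i : Fin m => (i : ℕ) < t, b i ω}).toReal
      ≤ Real.exp (-ε ^ 2 / 3) ^ y / (1 - Real.exp (-ε ^ 2 / 3)) :=
  mutation_prefix_bound_general μ m b hmeas hind h01 α hub ε hε0 y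
end
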